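/- arXiv:2302.07404 — 2 statements merged into one kernel-verified Lean document; each statement's English description precedes it below -/
import Mathlib

section
/- Let μ ≥ 0 and L > 0, and let f : ℝ^d → ℝ be a differentiable, L-smooth, μ-strongly convex function. Then for all x, y, z ∈ ℝ^d, f(y) - f(x) ≤ ⟨∇f((y+z)/2), y - x⟩ + ((L+μ)/8)‖y - z‖² - (μ/4)‖z - x‖² - (μ/4)‖y - x‖². (That is, the midpoint map (y,z) ↦ ∇f((y+z)/2) is a weak discrete gradient of f with parameters (α, β, γ) = ((L+μ)/8, μ/4, μ/4).) -/
open RealInnerProductSpace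

section Aux
variable {E : Type*} [NormedAddCommGroup E] [InnerProductSpace ℝ E] [CompleteSpace E]

lemma line_hasDerivAt (f : E → ℝ) (hf : Differentiable ℝ f) (a b : E) (t : ℝ) :
    HasDerivAt (fun s : ℝ => f (a + s • (b - a))) ⟪gradient f (a + t • (b - a)), b - a⟫ t := by
  have hc : HasDerivAt (fun s : ℝ => a + s • (b - a)) (b - a) t := by
    simpa using ((hasDerivAt_id t).smul_const (b - a)).const_add a
  have hF := hasGradientAt_iff_hasFDerivAt.mp (hf (a + t • (b - a))).hasGradientAt
  exact hF.comp_hasDerivAt t hc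

/-- Descent lemma. -/
lemma descent_lemma (f : E → ℝ) (hf : Differentiable ℝ f) (L : ℝ)
    (hsmooth : ∀ x y : E, ‖gradient f x - gradient f y‖ ≤ L * ‖x - y‖) (a b : E) :
    f b ≤ f a + ⟪gradient f a, b - a⟫ + L / 2 * ‖b - a‖ ^ 2 := by
  set g : ℝ → ℝ := fun t =>
    f (a + t • (b - a)) - t * ⟪gradient f a, b - a⟫ - L / 2 * t ^ 2 * ‖b - a‖ ^ 2 with hg
  have hg' : ∀ t : ℝ, HasDerivAt g
      (⟪gradient f (a + t • (b - a)), b - a⟫ - ⟪gradient f a, b - a⟫ - L * t * ‖b - a‖ ^ 2) t := by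
    intro t
    have h1 := line_hasDerivAt f hf a b t
    have h2 : HasDerivAt (fun s : ℝ => s * ⟪gradient f a, b - a⟫) ⟪gradient f a, b - a⟫ t := by
      simpa using (hasDerivAt_id t).mul_const (⟪gradient f a, b - a⟫ : ℝ)
    have h3 : HasDerivAt (fun s : ℝ => L / 2 * s ^ 2 * ‖b - a‖ ^ 2) (L * t * ‖b - a‖ ^ 2) t := by
      have := ((hasDerivAt_pow 2 t).const_mul (L / 2)).mul_const (‖b - a‖ ^ 2)
      refine this.congr_deriv ?_
      ring
    exact (h1.sub h2).sub h3
  have anti : AntitoneOn g (Set.Icc (0:ℝ) 1) := by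
    apply antitoneOn_of_hasDerivWithinAt_nonpos (convex_Icc 0 1)
      (fun t _ => (hg' t).continuousAt.continuousWithinAt)
      (fun t _ => (hg' t).hasDerivWithinAt)
    intro t ht
    rw [interior_Icc] at ht
    have ht0 : (0:ℝ) < t := ht.1
    have key : ⟪gradient f (a + t • (b - a)) - gradient f a, b - a⟫ ≤ L * t * ‖b - a‖ ^ 2 := by
      calc ⟪gradient f (a + t • (b - a)) - gradient f a, b - a⟫
          ≤ ‖gradient f (a + t • (b - a)) - gradient f a‖ * ‖b - a‖ :=
            real_inner_le_norm _ _
        _ ≤ (L * ‖(a + t • (b - a)) - a‖) * ‖b - a‖ := by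
            apply mul_le_mul_of_nonneg_right (hsmooth _ _) (norm_nonneg _)
        _ = L * t * ‖b - a‖ ^ 2 := by
            rw [add_sub_cancel_left, norm_smul, Real.norm_eq_abs, abs_of_pos ht0]
            ring
    rw [inner_sub_left] at key
    linarith
  have h01 := anti (Set.mem_Icc.mpr ⟨le_refl 0, zero_le_one⟩)
    (Set.mem_Icc.mpr ⟨zero_le_one, le_refl 1⟩) zero_le_one
  simp only [hg, zero_smul, add_zero, one_smul, add_sub_cancel] at h01
  nlinarith [h01]

/-- First-order condition from strong convexity. -/
lemma strong_convex_lower (f : E → ℝ) (hf : Differentiable ℝ f) (μ : ℝ)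
    (hsc : ConvexOn ℝ Set.univ (fun y => f y - μ / 2 * ‖y‖ ^ 2)) (m x : E) :
    f m + ⟪gradient f m, x - m⟫ + μ / 2 * ‖x - m‖ ^ 2 ≤ f x := by
  set h : E → ℝ := fun y => f y - μ / 2 * ‖y‖ ^ 2 with hh
  set ψ : ℝ → ℝ := fun t => h (m + t • (x - m)) with hψ
  have hψconv : ConvexOn ℝ Set.univ ψ := by
    have := hsc.comp_affineMap (AffineMap.lineMap m x : ℝ →ᵃ[ℝ] E)
    have heq : ψ = h ∘ (AffineMap.lineMap m x : ℝ →ᵃ[ℝ] E) := by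
      funext t
      simp [hψ, AffineMap.lineMap_apply, add_comm]
    rw [heq]
    simpa using this
  have hnorm : ∀ t : ℝ, ‖m + t • (x - m)‖ ^ 2
      = ‖m‖ ^ 2 + 2 * t * ⟪m, x - m⟫ + t ^ 2 * ‖x - m‖ ^ 2 := by
    intro t
    rw [norm_add_sq_real, inner_smul_right, norm_smul, Real.norm_eq_abs, mul_pow, sq_abs]
    ring
  have hψ' : HasDerivAt ψ (⟪gradient f m, x - m⟫ - μ * ⟪m, x - m⟫) 0 := by
    have h1 := line_hasDerivAt f hf m x 0
    simp only [zero_smul, add_zero] at h1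
    have h2 : HasDerivAt (fun t : ℝ => μ / 2 * (‖m‖ ^ 2 + 2 * t * ⟪m, x - m⟫ + t ^ 2 * ‖x - m‖ ^ 2))
        (μ * ⟪m, x - m⟫) 0 := by
      have ha : HasDerivAt (fun t : ℝ => ‖m‖ ^ 2 + 2 * t * ⟪m, x - m⟫ + t ^ 2 * ‖x - m‖ ^ 2)
          (2 * ⟪m, x - m⟫ + 2 * 0 * ‖x - m‖ ^ 2) 0 := by
        have hb : HasDerivAt (fun t : ℝ => 2 * t * ⟪m, x - m⟫) (2 * ⟪m, x - m⟫) 0 := by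
          simpa using (((hasDerivAt_id (0:ℝ)).const_mul 2).mul_const (⟪m, x - m⟫ : ℝ))
        have hcq : HasDerivAt (fun t : ℝ => t ^ 2 * ‖x - m‖ ^ 2) (2 * 0 * ‖x - m‖ ^ 2) 0 := by
          simpa using (hasDerivAt_pow 2 (0:ℝ)).mul_const (‖x - m‖ ^ 2)
        exact (hb.const_add (‖m‖ ^ 2)).add hcq
      have := ha.const_mul (μ / 2)
      refine this.congr_deriv ?_
      ring
    have heq : ψ = fun t : ℝ => f (m + t • (x - m))
        - μ / 2 * (‖m‖ ^ 2 + 2 * t * ⟪m, x - m⟫ + t ^ 2 * ‖x - m‖ ^ 2) := by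
      funext t
      simp only [hψ, hh]
      rw [hnorm t]
    rw [heq]
    exact h1.sub h2
  have hslope := hψconv.le_slope_of_hasDerivAt (Set.mem_univ 0) (Set.mem_univ 1) zero_lt_one hψ'
  have hsl : slope ψ 0 1 = ψ 1 - ψ 0 := by simp [slope]
  rw [hsl] at hslope
  have hψ1 : ψ 1 = f x - μ / 2 * ‖x‖ ^ 2 := by simp [hψ, hh]
  have hψ0 : ψ 0 = f m - μ / 2 * ‖m‖ ^ 2 := by simp [hψ, hh]
  rw [hψ1, hψ0] at hslope
  have hx2 : ‖x‖ ^ 2 = ‖m‖ ^ 2 + 2 * ⟪m, x - m⟫ + ‖x - m‖ ^ 2 := by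
    have := hnorm 1
    simpa using this
  rw [hx2] at hslope
  linarith

end Aux

/-- The midpoint map `(y,z) ↦ ∇f((y+z)/2)` is a weak discrete gradient of an `L`-smooth,
`μ`-strongly convex `f` with parameters `(α, β, γ) = ((L+μ)/8, μ/4, μ/4)`. -/
theorem midpoint_weak_discrete_gradient {d : ℕ} (μ L : ℝ) (hμ : 0 ≤ μ) (hL : 0 < L)
    (f : EuclideanSpace ℝ (Fin d) → ℝ)
    (hf : Differentiable ℝ f)
    (hsmooth : ∀ x y, ‖gradient f x - gradient f y‖ ≤ L * ‖x - y‖)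
    (hsc : ConvexOn ℝ Set.univ (fun y => f y - μ / 2 * ‖y‖ ^ 2)) :
    ∀ x y z : EuclideanSpace ℝ (Fin d),
      f y - f x ≤ ⟪gradient f ((2:ℝ)⁻¹ • (y + z)), y - x⟫
        + (L + μ) / 8 * ‖y - z‖ ^ 2 - μ / 4 * ‖z - x‖ ^ 2 - μ / 4 * ‖y - x‖ ^ 2 := by
  intro x y z
  set m : EuclideanSpace ℝ (Fin d) := (2:ℝ)⁻¹ • (y + z) with hm
  have h1 := descent_lemma f hf L hsmooth m y
  have h2 := strong_convex_lower f hf μ hsc m x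
  have hym : y - m = (2:ℝ)⁻¹ • (y - z) := by rw [hm]; module
  have hxm : x - m = (2:ℝ)⁻¹ • ((x - y) + (x - z)) := by rw [hm]; module
  have e1 : ‖y - m‖ ^ 2 = 4⁻¹ * ‖y - z‖ ^ 2 := by
    rw [hym, norm_smul, mul_pow, Real.norm_eq_abs]
    norm_num
  have e2 : ‖x - m‖ ^ 2 = 4⁻¹ * (‖x - y‖ ^ 2 + 2 * ⟪x - y, x - z⟫ + ‖x - z‖ ^ 2) := by
    rw [hxm, norm_smul, mul_pow, norm_add_sq_real, Real.norm_eq_abs]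
    norm_num
  have e3 : ‖y - z‖ ^ 2 = ‖x - z‖ ^ 2 - 2 * ⟪x - y, x - z⟫ + ‖x - y‖ ^ 2 := by
    have hyz : y - z = (x - z) - (x - y) := by module
    rw [hyz, norm_sub_sq_real, real_inner_comm]
  have hinner : ⟪gradient f m, y - m⟫ + ⟪gradient f m, m - x⟫ = ⟪gradient f m, y - x⟫ := by
    rw [← inner_add_right]
    congr 1
    module
  have hmx : ⟪gradient f m, m - x⟫ = - ⟪gradient f m, x - m⟫ := by
    rw [← inner_neg_right]
    congr 1
    module
  have hny : ‖y - x‖ = ‖x - y‖ := norm_sub_rev _ _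
  have hnz : ‖z - x‖ = ‖x - z‖ := norm_sub_rev _ _
  rw [hny, hnz]
  have E1 : L / 2 * ‖y - m‖ ^ 2 = L / 8 * ‖y - z‖ ^ 2 := by rw [e1]; ring
  have E2 : μ / 2 * ‖x - m‖ ^ 2
      = μ / 8 * (‖x - y‖ ^ 2 + 2 * ⟪x - y, x - z⟫ + ‖x - z‖ ^ 2) := by rw [e2]; ring
  have E3 : μ / 8 * ‖y - z‖ ^ 2
      = μ / 8 * ‖x - z‖ ^ 2 - μ / 4 * ⟪x - y, x - z⟫ + μ / 8 * ‖x - y‖ ^ 2 := by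
    rw [e3]; ring
  linarith [h1, h2, E1, E2, E3, hinner, hmx]
end

section
/- Let μ ≥ 0 and L > 0, and let f : ℝ^d → ℝ be a differentiable, L-smooth, μ-strongly convex function. Define the average vector field ∇_AVF f(y,z) = ∫₀¹ ∇f(τy + (1-τ)z) dτ. Then for all x, y, z ∈ ℝ^d, f(y) - f(x) ≤ ⟨∇_AVF f(y,z), y - x⟩ + (L/6 + μ/12)‖y - z‖² - (μ/4)‖z - x‖² - (μ/4)‖y - x‖². (That is, ∇_AVF f is a weak discrete gradient of f with parameters (α, β, γ) = (L/6 + μ/12, μ/4, μ/4).) -/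
open RealInnerProductSpace intervalIntegral


lemma avf_poly_int (A B C : ℝ) :
    ∫ τ in (0:ℝ)..1, (A * τ ^ 2 + B * τ + C) = A / 3 + B / 2 + C := by
  have h1 : IntervalIntegrable (fun τ : ℝ => A * τ ^ 2) MeasureTheory.volume 0 1 :=
    (by continuity : Continuous fun τ : ℝ => A * τ ^ 2).intervalIntegrable _ _
  have h2 : IntervalIntegrable (fun τ : ℝ => B * τ) MeasureTheory.volume 0 1 :=
    (by continuity : Continuous fun τ : ℝ => B * τ).intervalIntegrable _ _
  have h3 : IntervalIntegrable (fun τ : ℝ => C) MeasureTheory.volume 0 1 :=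
    intervalIntegrable_const
  rw [integral_add (h1.add h2) h3, integral_add h1 h2, integral_const_mul, integral_const_mul,
    integral_pow, integral_id, integral_const]
  norm_num
  ring

lemma avf_path_hasDerivAt {d : ℕ} (f : EuclideanSpace ℝ (Fin d) → ℝ)
    (hf : Differentiable ℝ f) (y z : EuclideanSpace ℝ (Fin d)) (t : ℝ) :
    HasDerivAt (fun s : ℝ => f (s • y + (1 - s) • z))
      ⟪gradient f (t • y + (1 - t) • z), y - z⟫ t := by
  have hpath : HasDerivAt (fun s : ℝ => s • y + (1 - s) • z) (y - z) t := by
    have h1 : HasDerivAt (fun s : ℝ => s • y) y t := by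
      simpa using (hasDerivAt_id t).smul_const y
    have h2 : HasDerivAt (fun s : ℝ => (1 - s) • z) (-z) t := by
      simpa using ((hasDerivAt_const t (1:ℝ)).sub (hasDerivAt_id t)).smul_const z
    rw [sub_eq_add_neg y z]; exact h1.add h2
  have hg := (hf (t • y + (1 - t) • z)).hasGradientAt.hasFDerivAt.comp_hasDerivAt t hpath
  simpa [InnerProductSpace.toDual_apply_apply, Function.comp_def] using hg


lemma avf_sc {d : ℕ} (μ : ℝ) (f : EuclideanSpace ℝ (Fin d) → ℝ)
    (hf : Differentiable ℝ f)
    (hsc : ConvexOn ℝ Set.univ (fun y => f y - μ / 2 * ‖y‖ ^ 2))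
    (a b : EuclideanSpace ℝ (Fin d)) :
    f a + ⟪gradient f a, b - a⟫ + μ / 2 * ‖b - a‖ ^ 2 ≤ f b := by
  set ψ : ℝ → ℝ := fun t => f (t • b + (1 - t) • a) - μ / 2 * ‖t • b + (1 - t) • a‖ ^ 2 with hψ
  have hconv : ConvexOn ℝ Set.univ ψ := by
    have h := hsc.comp_affineMap (AffineMap.lineMap a b)
    simp only [Set.preimage_univ, Function.comp_def, AffineMap.lineMap_apply_module] at h
    have he : ψ = fun t : ℝ => f ((1 - t) • a + t • b) - μ / 2 * ‖(1 - t) • a + t • b‖ ^ 2 := by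
      funext t
      rw [add_comm ((1 - t) • a) (t • b)]
    rw [he]
    exact h
  have hpathderiv : HasDerivAt (fun s : ℝ => s • b + (1 - s) • a) (b - a) (0:ℝ) := by
    have h1 : HasDerivAt (fun s : ℝ => s • b) b (0:ℝ) := by
      simpa using (hasDerivAt_id (0:ℝ)).smul_const b
    have h2 : HasDerivAt (fun s : ℝ => (1 - s) • a) (-a) (0:ℝ) := by
      simpa using ((hasDerivAt_const (0:ℝ) (1:ℝ)).sub (hasDerivAt_id (0:ℝ))).smul_const a
    rw [sub_eq_add_neg b a]; exact h1.add h2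
  have hd1 : HasDerivAt (fun s : ℝ => f (s • b + (1 - s) • a)) ⟪gradient f a, b - a⟫ (0:ℝ) := by
    have hg := (hf ((0:ℝ) • b + (1 - (0:ℝ)) • a)).hasGradientAt.hasFDerivAt.comp_hasDerivAt
      (0:ℝ) hpathderiv
    simpa [InnerProductSpace.toDual_apply_apply, Function.comp_def] using hg
  have hd2 : HasDerivAt (fun s : ℝ => μ / 2 * ‖s • b + (1 - s) • a‖ ^ 2) (μ * ⟪a, b - a⟫) (0:ℝ) := by
    have hin := (hpathderiv.inner ℝ hpathderiv).const_mul (μ / 2)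
    have heq : (fun s : ℝ => μ / 2 * ⟪s • b + (1 - s) • a, s • b + (1 - s) • a⟫)
        = fun s : ℝ => μ / 2 * ‖s • b + (1 - s) • a‖ ^ 2 := by
      funext s; rw [real_inner_self_eq_norm_sq]
    rw [heq] at hin
    refine hin.congr_deriv ?_
    simp only [zero_smul, sub_zero, one_smul, zero_add]
    rw [real_inner_comm (b - a) a]
    ring
  have hψd : HasDerivAt ψ (⟪gradient f a, b - a⟫ - μ * ⟪a, b - a⟫) (0:ℝ) := hd1.sub hd2
  have hs := hconv.le_slope_of_hasDerivAt (Set.mem_univ (0:ℝ)) (Set.mem_univ (1:ℝ))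
    zero_lt_one hψd
  rw [slope_def_field] at hs
  have hψ0 : ψ 0 = f a - μ / 2 * ‖a‖ ^ 2 := by simp [hψ]
  have hψ1 : ψ 1 = f b - μ / 2 * ‖b‖ ^ 2 := by simp [hψ]
  rw [hψ0, hψ1] at hs
  simp only [div_one, sub_zero] at hs
  have hnorm : ‖b - a‖ ^ 2 = ‖b‖ ^ 2 - 2 * ⟪b, a⟫ + ‖a‖ ^ 2 := norm_sub_sq_real b a
  have hinner : ⟪a, b - a⟫ = ⟪a, b⟫ - ‖a‖ ^ 2 := by
    rw [inner_sub_right, real_inner_self_eq_norm_sq]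
  have hcomm : ⟪b, a⟫ = ⟪a, b⟫ := real_inner_comm a b
  have heq2 : μ / 2 * ‖b - a‖ ^ 2 + μ * ⟪a, b - a⟫ = μ / 2 * ‖b‖ ^ 2 - μ / 2 * ‖a‖ ^ 2 := by
    rw [hnorm, hinner, hcomm]; ring
  linarith [hs, heq2]


set_option maxHeartbeats 1000000 in
theorem avf_weak_discrete_gradient' {d : ℕ} (μ L : ℝ) (hμ : 0 ≤ μ) (hL : 0 < L)
    (f : EuclideanSpace ℝ (Fin d) → ℝ)
    (hf : Differentiable ℝ f)
    (hsmooth : ∀ x y, ‖gradient f x - gradient f y‖ ≤ L * ‖x - y‖)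
    (hsc : ConvexOn ℝ Set.univ (fun y => f y - μ / 2 * ‖y‖ ^ 2))
    (hscq : ∀ a b : EuclideanSpace ℝ (Fin d),
      f a + ⟪gradient f a, b - a⟫ + μ / 2 * ‖b - a‖ ^ 2 ≤ f b)
    (hpathd : ∀ (y z : EuclideanSpace ℝ (Fin d)) (t : ℝ),
      HasDerivAt (fun s : ℝ => f (s • y + (1 - s) • z))
        ⟪gradient f (t • y + (1 - t) • z), y - z⟫ t)
    (hpoly : ∀ A B C : ℝ, ∫ τ in (0:ℝ)..1, (A * τ ^ 2 + B * τ + C) = A / 3 + B / 2 + C) :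
    ∀ x y z : EuclideanSpace ℝ (Fin d),
      f y - f x ≤ ⟪∫ τ in (0:ℝ)..1, gradient f (τ • y + (1 - τ) • z), y - x⟫
        + (L / 6 + μ / 12) * ‖y - z‖ ^ 2 - μ / 4 * ‖z - x‖ ^ 2 - μ / 4 * ‖y - x‖ ^ 2 := by
  intro x y z
  have hcontg : Continuous (gradient f) := by
    have hlip : LipschitzWith (Real.toNNReal L) (gradient f) := by
      apply LipschitzWith.of_dist_le_mul
      intro a b
      rw [dist_eq_norm, dist_eq_norm, Real.coe_toNNReal L hL.le]
      exact hsmooth a b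
    exact hlip.continuous
  have hcontw : Continuous (fun τ : ℝ => τ • y + (1 - τ) • z) := by fun_prop
  have hG : Continuous (fun τ : ℝ => gradient f (τ • y + (1 - τ) • z)) := hcontg.comp hcontw
  have hGI : IntervalIntegrable (fun τ : ℝ => gradient f (τ • y + (1 - τ) • z))
      MeasureTheory.volume 0 1 := hG.intervalIntegrable 0 1
  have hcφ : Continuous (fun τ : ℝ => f (τ • y + (1 - τ) • z)) := hf.continuous.comp hcontw
  have hcp : Continuous (fun τ : ℝ => ⟪gradient f (τ • y + (1 - τ) • z), y - z⟫) :=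
    hG.inner continuous_const
  have hcq : Continuous (fun τ : ℝ => ⟪gradient f (τ • y + (1 - τ) • z), y - x⟫) :=
    hG.inner continuous_const
  have hcN : Continuous (fun τ : ℝ => ‖x - (τ • y + (1 - τ) • z)‖ ^ 2) :=
    ((continuous_const.sub hcontw).norm).pow 2
  -- Step 1 : swap inner and integral
  have hswap : ⟪∫ τ in (0:ℝ)..1, gradient f (τ • y + (1 - τ) • z), y - x⟫
      = ∫ τ in (0:ℝ)..1, ⟪gradient f (τ • y + (1 - τ) • z), y - x⟫ := by
    have h := (innerSL ℝ (y - x)).intervalIntegral_comp_comm hGI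
    simp only [innerSL_apply_apply] at h
    rw [real_inner_comm, ← h]
    exact intervalIntegral.integral_congr fun τ _ => real_inner_comm _ _
  -- Step 2 : integration by parts, u = 1 - τ
  have hIp1 : ∫ τ in (0:ℝ)..1, (1 - τ) * ⟪gradient f (τ • y + (1 - τ) • z), y - z⟫
      = (∫ τ in (0:ℝ)..1, f (τ • y + (1 - τ) • z)) - f z := by
    have h := intervalIntegral.integral_mul_deriv_eq_deriv_mul
      (u := fun τ : ℝ => 1 - τ) (u' := fun _ : ℝ => (-1 : ℝ))
      (v := fun τ : ℝ => f (τ • y + (1 - τ) • z))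
      (v' := fun τ : ℝ => ⟪gradient f (τ • y + (1 - τ) • z), y - z⟫)
      (fun τ _ => by simpa using ((hasDerivAt_id' τ).const_sub (1:ℝ)))
      (fun τ _ => hpathd y z τ)
      (intervalIntegrable_const) (hcp.intervalIntegrable 0 1)
    rw [h]
    have h2 : ∫ τ in (0:ℝ)..1, (-1 : ℝ) * f (τ • y + (1 - τ) • z)
        = -∫ τ in (0:ℝ)..1, f (τ • y + (1 - τ) • z) := by
      rw [intervalIntegral.integral_const_mul]; ring
    rw [h2]
    norm_num
    ring
  -- Step 3 : integration by parts, u = 2τ - 1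
  have hImid : ∫ τ in (0:ℝ)..1, (2 * τ - 1) * ⟪gradient f (τ • y + (1 - τ) • z), y - z⟫
      = f y + f z - 2 * ∫ τ in (0:ℝ)..1, f (τ • y + (1 - τ) • z) := by
    have h := intervalIntegral.integral_mul_deriv_eq_deriv_mul
      (u := fun τ : ℝ => 2 * τ - 1) (u' := fun _ : ℝ => (2 : ℝ))
      (v := fun τ : ℝ => f (τ • y + (1 - τ) • z))
      (v' := fun τ : ℝ => ⟪gradient f (τ • y + (1 - τ) • z), y - z⟫)
      (fun τ _ => by simpa using (((hasDerivAt_id τ).const_mul (2:ℝ)).sub_const (1:ℝ)))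
      (fun τ _ => hpathd y z τ)
      (intervalIntegrable_const) (hcp.intervalIntegrable 0 1)
    rw [h, intervalIntegral.integral_const_mul]
    norm_num
  -- Lipschitz property of the directional derivative
  have habs : ∀ s t : ℝ, |⟪gradient f (s • y + (1 - s) • z), y - z⟫
      - ⟪gradient f (t • y + (1 - t) • z), y - z⟫| ≤ L * |s - t| * ‖y - z‖ ^ 2 := by
    intro s t
    have h1 : ⟪gradient f (s • y + (1 - s) • z), y - z⟫
        - ⟪gradient f (t • y + (1 - t) • z), y - z⟫
        = ⟪gradient f (s • y + (1 - s) • z) - gradient f (t • y + (1 - t) • z), y - z⟫ := by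
      rw [inner_sub_left]
    rw [h1]
    calc |⟪gradient f (s • y + (1 - s) • z) - gradient f (t • y + (1 - t) • z), y - z⟫|
        ≤ ‖gradient f (s • y + (1 - s) • z) - gradient f (t • y + (1 - t) • z)‖ * ‖y - z‖ :=
          abs_real_inner_le_norm _ _
      _ ≤ (L * ‖(s • y + (1 - s) • z) - (t • y + (1 - t) • z)‖) * ‖y - z‖ := by
          apply mul_le_mul_of_nonneg_right _ (norm_nonneg _)
          exact hsmooth _ _
      _ = L * |s - t| * ‖y - z‖ ^ 2 := by
          have : (s • y + (1 - s) • z) - (t • y + (1 - t) • z) = (s - t) • (y - z) := by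
            module
          rw [this, norm_smul, Real.norm_eq_abs]
          ring
  -- Step 4 : midpoint bound
  have hmid_le : ∫ τ in (0:ℝ)..1, (2 * τ - 1) * ⟪gradient f (τ • y + (1 - τ) • z), y - z⟫
      ≤ L / 6 * ‖y - z‖ ^ 2 := by
    set c : ℝ := ⟪gradient f ((1/2 : ℝ) • y + (1 - (1/2 : ℝ)) • z), y - z⟫ with hc
    have hpt : ∀ τ ∈ Set.Icc (0:ℝ) 1,
        (2 * τ - 1) * ⟪gradient f (τ • y + (1 - τ) • z), y - z⟫
        ≤ 2 * L * ‖y - z‖ ^ 2 * (τ - 1/2) ^ 2 + (2 * τ - 1) * c := by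
      intro τ _
      have ha := habs τ (1/2)
      have h2 : (2 * τ - 1) * (⟪gradient f (τ • y + (1 - τ) • z), y - z⟫ - c)
          ≤ |2 * τ - 1| * |⟪gradient f (τ • y + (1 - τ) • z), y - z⟫ - c| := by
        rw [← abs_mul]; exact le_abs_self _
      have h3 : |2 * τ - 1| * |⟪gradient f (τ • y + (1 - τ) • z), y - z⟫ - c|
          ≤ |2 * τ - 1| * (L * |τ - 1/2| * ‖y - z‖ ^ 2) :=
        mul_le_mul_of_nonneg_left ha (abs_nonneg _)
      have h5 : |2 * τ - 1| = 2 * |τ - 1/2| := by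
        rw [show (2 * τ - 1 : ℝ) = 2 * (τ - 1/2) by ring, abs_mul]
        norm_num
      have h6 : |τ - 1/2| ^ 2 = (τ - 1/2) ^ 2 := sq_abs _
      have h4 : |2 * τ - 1| * (L * |τ - 1/2| * ‖y - z‖ ^ 2)
          = 2 * L * ‖y - z‖ ^ 2 * (τ - 1/2) ^ 2 := by
        rw [h5, show 2 * |τ - 1/2| * (L * |τ - 1/2| * ‖y - z‖ ^ 2)
          = 2 * L * ‖y - z‖ ^ 2 * |τ - 1/2| ^ 2 by ring, h6]
      nlinarith [h2, h3, h4]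
    have hint : ∫ τ in (0:ℝ)..1,
        (2 * L * ‖y - z‖ ^ 2 * (τ - 1/2) ^ 2 + (2 * τ - 1) * c) = L / 6 * ‖y - z‖ ^ 2 := by
      have he : (fun τ : ℝ => 2 * L * ‖y - z‖ ^ 2 * (τ - 1/2) ^ 2 + (2 * τ - 1) * c)
          = fun τ : ℝ => (2 * L * ‖y - z‖ ^ 2) * τ ^ 2
            + (2 * c - 2 * L * ‖y - z‖ ^ 2) * τ + (2 * L * ‖y - z‖ ^ 2 / 4 - c) := by
        funext τ; ring
      rw [he, hpoly]
      ring
    calc ∫ τ in (0:ℝ)..1, (2 * τ - 1) * ⟪gradient f (τ • y + (1 - τ) • z), y - z⟫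
        ≤ ∫ τ in (0:ℝ)..1, (2 * L * ‖y - z‖ ^ 2 * (τ - 1/2) ^ 2 + (2 * τ - 1) * c) :=
          intervalIntegral.integral_mono_on (by norm_num)
            (((by fun_prop : Continuous fun τ : ℝ => 2 * τ - 1).mul hcp).intervalIntegrable 0 1)
            ((by fun_prop : Continuous fun τ : ℝ =>
              2 * L * ‖y - z‖ ^ 2 * (τ - 1/2) ^ 2 + (2 * τ - 1) * c).intervalIntegrable 0 1)
            hpt
      _ = L / 6 * ‖y - z‖ ^ 2 := hint
  -- Step 5 : the quadratic integral
  have hIN : ∫ τ in (0:ℝ)..1, ‖x - (τ • y + (1 - τ) • z)‖ ^ 2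
      = ‖x - z‖ ^ 2 - ⟪x - z, y - z⟫ + ‖y - z‖ ^ 2 / 3 := by
    have hpt : (fun τ : ℝ => ‖x - (τ • y + (1 - τ) • z)‖ ^ 2)
        = fun τ : ℝ => ‖y - z‖ ^ 2 * τ ^ 2 + (-2 * ⟪x - z, y - z⟫) * τ + ‖x - z‖ ^ 2 := by
      funext τ
      have hxw : x - (τ • y + (1 - τ) • z) = (x - z) - τ • (y - z) := by module
      rw [hxw, norm_sub_sq_real, real_inner_smul_right, norm_smul, Real.norm_eq_abs,
        mul_pow, sq_abs]
      ring
    rw [hpt, hpoly]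
    ring
  -- Step 6 : integrated strong convexity
  have hsc_int : (∫ τ in (0:ℝ)..1, f (τ • y + (1 - τ) • z))
      + (∫ τ in (0:ℝ)..1, (1 - τ) * ⟪gradient f (τ • y + (1 - τ) • z), y - z⟫)
      + μ / 2 * (∫ τ in (0:ℝ)..1, ‖x - (τ • y + (1 - τ) • z)‖ ^ 2) - f x
      ≤ ∫ τ in (0:ℝ)..1, ⟪gradient f (τ • y + (1 - τ) • z), y - x⟫ := by
    have hpt : ∀ τ ∈ Set.Icc (0:ℝ) 1,
        f (τ • y + (1 - τ) • z) + (1 - τ) * ⟪gradient f (τ • y + (1 - τ) • z), y - z⟫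
          + μ / 2 * ‖x - (τ • y + (1 - τ) • z)‖ ^ 2 - f x
        ≤ ⟪gradient f (τ • y + (1 - τ) • z), y - x⟫ := by
      intro τ _
      have h := hscq (τ • y + (1 - τ) • z) x
      have hinner : ⟪gradient f (τ • y + (1 - τ) • z), x - (τ • y + (1 - τ) • z)⟫
          = (1 - τ) * ⟪gradient f (τ • y + (1 - τ) • z), y - z⟫
            - ⟪gradient f (τ • y + (1 - τ) • z), y - x⟫ := by
        rw [show x - (τ • y + (1 - τ) • z) = (1 - τ) • (y - z) - (y - x) from by module,
          inner_sub_right, real_inner_smul_right]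
      linarith [h, hinner.symm.le, hinner.le]
    have hc1 : Continuous (fun τ : ℝ =>
        (1 - τ) * ⟪gradient f (τ • y + (1 - τ) • z), y - z⟫) :=
      (by fun_prop : Continuous fun τ : ℝ => 1 - τ).mul hcp
    have hc2 : Continuous (fun τ : ℝ => μ / 2 * ‖x - (τ • y + (1 - τ) • z)‖ ^ 2) :=
      continuous_const.mul hcN
    have hmono : ∫ τ in (0:ℝ)..1,
        (f (τ • y + (1 - τ) • z) + (1 - τ) * ⟪gradient f (τ • y + (1 - τ) • z), y - z⟫
          + μ / 2 * ‖x - (τ • y + (1 - τ) • z)‖ ^ 2 - f x)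
        ≤ ∫ τ in (0:ℝ)..1, ⟪gradient f (τ • y + (1 - τ) • z), y - x⟫ :=
      intervalIntegral.integral_mono_on (by norm_num : (0:ℝ) ≤ 1)
        ((((hcφ.add hc1).add hc2).sub continuous_const).intervalIntegrable 0 1)
        (hcq.intervalIntegrable 0 1) hpt
    have hsplit : ∫ τ in (0:ℝ)..1,
        (f (τ • y + (1 - τ) • z) + (1 - τ) * ⟪gradient f (τ • y + (1 - τ) • z), y - z⟫
          + μ / 2 * ‖x - (τ • y + (1 - τ) • z)‖ ^ 2 - f x)
        = (∫ τ in (0:ℝ)..1, f (τ • y + (1 - τ) • z))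
          + (∫ τ in (0:ℝ)..1, (1 - τ) * ⟪gradient f (τ • y + (1 - τ) • z), y - z⟫)
          + μ / 2 * (∫ τ in (0:ℝ)..1, ‖x - (τ • y + (1 - τ) • z)‖ ^ 2) - f x := by
      rw [intervalIntegral.integral_sub (f := fun τ : ℝ => f (τ • y + (1 - τ) • z)
            + (1 - τ) * ⟪gradient f (τ • y + (1 - τ) • z), y - z⟫
            + μ / 2 * ‖x - (τ • y + (1 - τ) • z)‖ ^ 2)
          (((hcφ.add hc1).add hc2).intervalIntegrable 0 1) intervalIntegrable_const,
        intervalIntegral.integral_add (f := fun τ : ℝ => f (τ • y + (1 - τ) • z)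
            + (1 - τ) * ⟪gradient f (τ • y + (1 - τ) • z), y - z⟫)
          (g := fun τ : ℝ => μ / 2 * ‖x - (τ • y + (1 - τ) • z)‖ ^ 2)
          ((hcφ.add hc1).intervalIntegrable 0 1) (hc2.intervalIntegrable 0 1),
        intervalIntegral.integral_add (f := fun τ : ℝ => f (τ • y + (1 - τ) • z))
          (g := fun τ : ℝ => (1 - τ) * ⟪gradient f (τ • y + (1 - τ) • z), y - z⟫)
          (hcφ.intervalIntegrable 0 1) (hc1.intervalIntegrable 0 1),
        intervalIntegral.integral_const_mul, intervalIntegral.integral_const]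
      simp
    rw [hsplit] at hmono
    exact hmono
  -- Final assembly
  have hA' : μ / 4 * ‖y - x‖ ^ 2
      = μ / 4 * ‖y - z‖ ^ 2 - μ / 2 * ⟪x - z, y - z⟫ + μ / 4 * ‖x - z‖ ^ 2 := by
    have hA : ‖y - x‖ ^ 2 = ‖y - z‖ ^ 2 - 2 * ⟪x - z, y - z⟫ + ‖x - z‖ ^ 2 := by
      rw [show y - x = (y - z) - (x - z) from by module, norm_sub_sq_real,
        real_inner_comm (y - z) (x - z)]
    rw [hA]; ring
  have hB' : μ / 4 * ‖z - x‖ ^ 2 = μ / 4 * ‖x - z‖ ^ 2 := by rw [norm_sub_rev]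
  have hIN' : μ / 2 * (∫ τ in (0:ℝ)..1, ‖x - (τ • y + (1 - τ) • z)‖ ^ 2)
      = μ / 2 * ‖x - z‖ ^ 2 - μ / 2 * ⟪x - z, y - z⟫ + μ / 6 * ‖y - z‖ ^ 2 := by
    rw [hIN]; ring
  rw [hswap]
  linarith [hsc_int, hIp1, hImid, hmid_le, hIN', hA', hB']

/-- The average vector field `∇_AVF f(y,z) = ∫₀¹ ∇f(τy + (1-τ)z) dτ` is a weak discrete
gradient of an `L`-smooth, `μ`-strongly convex `f` with parameters
`(α, β, γ) = (L/6 + μ/12, μ/4, μ/4)`. -/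
theorem avf_weak_discrete_gradient {d : ℕ} (μ L : ℝ) (hμ : 0 ≤ μ) (hL : 0 < L)
    (f : EuclideanSpace ℝ (Fin d) → ℝ)
    (hf : Differentiable ℝ f)
    (hsmooth : ∀ x y, ‖gradient f x - gradient f y‖ ≤ L * ‖x - y‖)
    (hsc : ConvexOn ℝ Set.univ (fun y => f y - μ / 2 * ‖y‖ ^ 2)) :
    ∀ x y z : EuclideanSpace ℝ (Fin d),
      f y - f x ≤ ⟪∫ τ in (0:ℝ)..1, gradient f (τ • y + (1 - τ) • z), y - x⟫
        + (L / 6 + μ / 12) * ‖y - z‖ ^ 2 - μ / 4 * ‖z - x‖ ^ 2 - μ / 4 * ‖y - x‖ ^ 2 := by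
  exact avf_weak_discrete_gradient' μ L hμ hL f hf hsmooth hsc
    (avf_sc μ f hf hsc) (fun y z t => avf_path_hasDerivAt f hf y z t) avf_poly_int
end
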